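/- Let $V$ be a real inner product space of dimension $n \ge 3$, $E$ a symmetric trace-free bilinear form on $V$, and $R > 0$. With $\mathrm{Rm}$ and $\mathrm{Ric}$ as in the conformally flat decomposition (i.e., $\mathrm{Rm}_{ikjl} = \frac{1}{n-2}(E_{ij}g_{kl} - E_{il}g_{jk} + E_{kl}g_{ij} - E_{jk}g_{il}) + \frac{R}{n(n-1)}(g_{ij}g_{kl} - g_{il}g_{jk})$ and $\mathrm{Ric}_{jk} = E_{jk} + \frac{R}{n}g_{jk}$), one has the inequality $-\mathrm{Rm}_{ikjl}E_{ij}E_{kl} + \mathrm{Ric}_{jk}E_{ij}E_{ik} \ge \frac{1}{n-1}|E|^2 \big( R - \sqrt{n(n-1)}\,|E| \big)$. -/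

import Mathlib

/-!
With `g = δ` and `tr E = 0` the two contractions collapse to
`-Rm(E, E) + Ric(E, E) = n/(n-2) · tr E³ + R/(n-1) · |E|²`, so the claim is Okumura's sharp bound
`tr E³ ≥ -(n-2) t |E|²`, where `|E|² = n(n-1) t²`. For the eigenvalues `λᵢ` of `E`,
Cauchy–Schwarz on the other `n - 1` eigenvalues gives `λᵢ ≥ -(n-1) t`, hence
`0 ≤ ∑ (λᵢ + (n-1) t)(λᵢ - t)² = tr E³ + (n-2) t |E|²`.
-/

open Finset

theorem Matrix.IsHermitian.trace_pow_eq_sum_eigenvalues_pow {ι : Type*} [Fintype ι]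
    [DecidableEq ι] {A : Matrix ι ι ℝ} (hA : A.IsHermitian) (k : ℕ) :
    (A ^ k).trace = ∑ i, hA.eigenvalues i ^ k := by
  conv_lhs => rw [hA.spectral_theorem, ← map_pow, Unitary.conjStarAlgAut_apply,
    Matrix.trace_mul_cycle, Unitary.coe_star_mul_self, one_mul, Matrix.diagonal_pow,
    Matrix.trace_diagonal]
  simp

section SharpCubic

variable {ι : Type*} [Fintype ι]

theorem card_mul_sq_le_of_sum_eq_zero {x : ι → ℝ} (hx : ∑ i, x i = 0) (i : ι) :
    Fintype.card ι * x i ^ 2 ≤ (Fintype.card ι - 1) * ∑ j, x j ^ 2 := by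
  classical
  have hsum : ∑ j ∈ univ.erase i, x j = -x i := by
    linarith [add_sum_erase univ x (mem_univ i)]
  have hsq : ∑ j ∈ univ.erase i, x j ^ 2 = ∑ j, x j ^ 2 - x i ^ 2 := by
    linarith [add_sum_erase univ (x · ^ 2) (mem_univ i)]
  have hcard : ((univ.erase i).card : ℝ) = Fintype.card ι - 1 := by
    rw [card_erase_of_mem (mem_univ i), card_univ, Nat.cast_sub (Fintype.card_pos_iff.2 ⟨i⟩),
      Nat.cast_one]
  have hcs := sq_sum_le_card_mul_sum_sq (s := univ.erase i) (f := x)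
  rw [hsum, hsq, hcard] at hcs
  linarith

theorem neg_le_of_sum_eq_zero_of_sum_sq_eq {x : ι → ℝ} (hx : ∑ i, x i = 0) {t : ℝ} (ht : 0 ≤ t)
    (hS : ∑ i, x i ^ 2 = Fintype.card ι * (Fintype.card ι - 1) * t ^ 2) (i : ι) :
    -((Fintype.card ι - 1) * t) ≤ x i := by
  have hn : (1 : ℝ) ≤ Fintype.card ι := by exact_mod_cast Fintype.card_pos_iff.2 ⟨i⟩
  have hbound := card_mul_sq_le_of_sum_eq_zero hx i
  rw [hS] at hbound
  have hsq : x i ^ 2 ≤ ((Fintype.card ι - 1) * t) ^ 2 := by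
    refine le_of_mul_le_mul_left ?_ (by linarith : (0 : ℝ) < Fintype.card ι)
    linarith
  exact (abs_le_of_sq_le_sq' hsq (mul_nonneg (by linarith) ht)).1

theorem sum_pow_three_ge_of_sum_eq_zero {x : ι → ℝ} (hx : ∑ i, x i = 0) {t : ℝ} (ht : 0 ≤ t)
    (hS : ∑ i, x i ^ 2 = Fintype.card ι * (Fintype.card ι - 1) * t ^ 2) :
    -((Fintype.card ι - 2) * t * ∑ i, x i ^ 2) ≤ ∑ i, x i ^ 3 := by
  set n : ℝ := (Fintype.card ι : ℝ)
  have hterm : ∀ i, (x i + (n - 1) * t) * (x i - t) ^ 2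
      = x i ^ 3 + (n - 3) * t * x i ^ 2 + (3 - 2 * n) * t ^ 2 * x i + (n - 1) * t ^ 3 :=
    fun i => by ring
  have hnonneg : 0 ≤ ∑ i, (x i + (n - 1) * t) * (x i - t) ^ 2 :=
    sum_nonneg fun i _ => mul_nonneg
      (neg_le_iff_add_nonneg.1 (neg_le_of_sum_eq_zero_of_sum_sq_eq hx ht hS i)) (sq_nonneg _)
  simp only [hterm, sum_add_distrib, ← mul_sum, sum_const, card_univ, nsmul_eq_mul, hx] at hnonneg
  rw [hS] at hnonneg ⊢
  nlinarith

theorem sum_cube_ge_of_symm_of_trace_eq_zero {E : ι → ι → ℝ} (hsymm : ∀ i j, E i j = E j i)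
    (htr : ∑ i, E i i = 0) {t : ℝ} (ht : 0 ≤ t)
    (hS : ∑ i, ∑ j, E i j ^ 2 = Fintype.card ι * (Fintype.card ι - 1) * t ^ 2) :
    -((Fintype.card ι - 2) * t * ∑ i, ∑ j, E i j ^ 2) ≤ ∑ i, ∑ j, ∑ k, E i j * E j k * E k i := by
  classical
  have hA : (Matrix.of E).IsHermitian := Matrix.ext fun i j => hsymm j i
  have htrace₁ : ∑ i, hA.eigenvalues i = 0 := by
    simpa [Matrix.trace, htr] using (hA.trace_pow_eq_sum_eigenvalues_pow 1).symm
  have htrace₂ : ∑ i, hA.eigenvalues i ^ 2 = ∑ i, ∑ j, E i j ^ 2 := by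
    rw [← hA.trace_pow_eq_sum_eigenvalues_pow]
    simp only [sq, Matrix.trace, Matrix.diag, Matrix.mul_apply, Matrix.of_apply]
    exact sum_congr rfl fun i _ => sum_congr rfl fun j _ => by rw [hsymm j i]
  have htrace₃ : ∑ i, hA.eigenvalues i ^ 3 = ∑ i, ∑ j, ∑ k, E i j * E j k * E k i := by
    rw [← hA.trace_pow_eq_sum_eigenvalues_pow, pow_succ, sq]
    simp only [Matrix.trace, Matrix.diag, Matrix.mul_apply, sum_mul, Matrix.of_apply]
    exact sum_congr rfl fun i _ => sum_comm
  rw [← htrace₂] at hS ⊢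
  exact htrace₃ ▸ sum_pow_three_ge_of_sum_eq_zero htrace₁ ht hS

end SharpCubic

section Contractions

variable {ι : Type*} [Fintype ι] [DecidableEq ι] {E : ι → ι → ℝ} {g : ι → ι → ℝ}

theorem sum_rm_mul_mul_eq (a b : ℝ) (hsymm : ∀ i j, E i j = E j i) (htr : ∑ i, E i i = 0)
    (hg : ∀ i j, g i j = if i = j then 1 else 0) {Rm : ι → ι → ι → ι → ℝ}
    (hRm : ∀ i k j l, Rm i k j l =
      a * (E i j * g k l - E i l * g j k + E k l * g i j - E j k * g i l) +
        b * (g i j * g k l - g i l * g j k)) :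
    ∑ i, ∑ k, ∑ j, ∑ l, Rm i k j l * E i j * E k l =
      -(2 * a * ∑ i, ∑ j, ∑ k, E i j * E j k * E k i) - b * ∑ i, ∑ j, E i j ^ 2 := by
  have trace₂ (c : ι → ℝ) : ∑ x, ∑ y, c x * E y y = 0 := by
    simp [← mul_sum, htr]
  have trace₃ (c : ι → ι → ℝ) : ∑ x, ∑ y, ∑ z, c x z * E y y = 0 := by
    simp [← sum_mul, ← mul_sum, htr]
  have trace_mid (c d : ι → ι → ℝ) : ∑ x, ∑ y, ∑ z, c y z * E x x * d y z = 0 := by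
    simp [mul_right_comm _ (E _ _), ← sum_mul, ← mul_sum, htr]
  have cube₁ : ∑ x, ∑ y, ∑ z, a * E x z * E x y * E y z =
      a * ∑ i, ∑ j, ∑ k, E i j * E j k * E k i := by
    simp only [mul_sum]
    refine sum_congr rfl fun x _ => sum_congr rfl fun y _ => sum_congr rfl fun z _ => ?_
    rw [hsymm x z]; ring
  have cube₂ : ∑ x, ∑ y, ∑ z, a * E z y * E x z * E y x =
      a * ∑ i, ∑ j, ∑ k, E i j * E j k * E k i := by
    simp only [mul_sum]
    exact sum_congr rfl fun x _ =>
      sum_comm.trans (sum_congr rfl fun y _ => sum_congr rfl fun z _ => by ring)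
  have square : ∑ x, ∑ y, b * E x y * E y x = b * ∑ i, ∑ j, E i j ^ 2 := by
    simp only [mul_sum]
    refine sum_congr rfl fun x _ => sum_congr rfl fun y _ => ?_
    rw [hsymm y x]; ring
  -- Contracting the `δ`s leaves three terms carrying a factor `tr E`, two copies of `tr E³`
  -- and one of `|E|²`.
  simp only [hRm, hg, add_mul, sub_mul, mul_add, mul_sub, sum_add_distrib, sum_sub_distrib,
    mul_ite, ite_mul, mul_one, mul_zero, zero_mul, sum_ite_eq, sum_ite_eq', mem_univ, if_true,
    sum_ite_irrel, sum_const_zero]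
  rw [trace₂, trace₃, trace_mid (fun y z => a * E y z) E, cube₁, cube₂, square]
  ring

theorem sum_ric_mul_mul_eq (c : ℝ) (hsymm : ∀ i j, E i j = E j i)
    (hg : ∀ i j, g i j = if i = j then 1 else 0) {Ric : ι → ι → ℝ}
    (hRic : ∀ j k, Ric j k = E j k + c * g j k) :
    ∑ i, ∑ j, ∑ k, Ric j k * E i j * E i k =
      ∑ i, ∑ j, ∑ k, E i j * E j k * E k i + c * ∑ i, ∑ j, E i j ^ 2 := by
  simp only [hRic, hg, add_mul, sum_add_distrib, mul_ite, ite_mul, mul_one, mul_zero, zero_mul,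
    sum_ite_eq, mem_univ, if_true, mul_sum]
  congr 1
  · refine sum_congr rfl fun i _ => sum_congr rfl fun j _ => sum_congr rfl fun k _ => ?_
    rw [hsymm i k]; ring
  · exact sum_congr rfl fun i _ => sum_congr rfl fun j _ => by ring

end Contractions

theorem conformally_flat_curvature_inequality_general (n : ℕ) (hn : 3 ≤ n) (R : ℝ)
    (E : Fin n → Fin n → ℝ) (hsymm : ∀ i j, E i j = E j i) (htr : ∑ i, E i i = 0)
    (g : Fin n → Fin n → ℝ) (hg : ∀ i j, g i j = if i = j then 1 else 0)
    (Rm : Fin n → Fin n → Fin n → Fin n → ℝ)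
    (hRm : ∀ i k j l, Rm i k j l =
        (1 / ((n : ℝ) - 2)) *
          (E i j * g k l - E i l * g j k + E k l * g i j - E j k * g i l) +
        (R / ((n : ℝ) * ((n : ℝ) - 1))) * (g i j * g k l - g i l * g j k))
    (Ric : Fin n → Fin n → ℝ)
    (hRic : ∀ j k, Ric j k = E j k + (R / (n : ℝ)) * g j k) :
    -(∑ i, ∑ k, ∑ j, ∑ l, Rm i k j l * E i j * E k l) +
        (∑ i, ∑ j, ∑ k, Ric j k * E i j * E i k) ≥
      (1 / ((n : ℝ) - 1)) * (∑ i, ∑ j, (E i j) ^ 2) *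
        (R - Real.sqrt ((n : ℝ) * ((n : ℝ) - 1)) * Real.sqrt (∑ i, ∑ j, (E i j) ^ 2)) := by
  rw [sum_rm_mul_mul_eq _ _ hsymm htr hg hRm, sum_ric_mul_mul_eq _ hsymm hg hRic]
  set S := ∑ i, ∑ j, E i j ^ 2
  set T := ∑ i, ∑ j, ∑ k, E i j * E j k * E k i
  have hn' : (3 : ℝ) ≤ n := by exact_mod_cast hn
  have hn₁ : (n : ℝ) - 1 ≠ 0 := by linarith
  have hn₂ : (n : ℝ) - 2 ≠ 0 := by linarith
  have hσ : 0 < (n : ℝ) * (n - 1) := by nlinarith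
  set σ := Real.sqrt ((n : ℝ) * (n - 1))
  set t := Real.sqrt S / σ with ht
  have hσ_sq : σ ^ 2 = n * (n - 1) := Real.sq_sqrt hσ.le
  have hσt : σ * Real.sqrt S = n * (n - 1) * t := by
    rw [ht, ← hσ_sq]; field_simp
  have hS : S = n * (n - 1) * t ^ 2 := by
    rw [ht, div_pow, hσ_sq, Real.sq_sqrt (by positivity)]; field_simp
  have hcube : -((n - 2) * t * S) ≤ T := by
    simpa using sum_cube_ge_of_symm_of_trace_eq_zero hsymm htr (by positivity) (by simpa using hS)
  calc 1 / ((n : ℝ) - 1) * S * (R - σ * Real.sqrt S)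
      ≤ n / (n - 2) * (T + (n - 2) * t * S) + 1 / ((n : ℝ) - 1) * S * (R - σ * Real.sqrt S) :=
        le_add_of_nonneg_left (mul_nonneg (div_nonneg (by linarith) (by linarith)) (by linarith))
    _ = _ := by
        rw [hσt]
        field_simp
        ring

/-- With `Rm`, `Ric` the conformally flat curvature data built from a
symmetric trace-free bilinear form `E` and a constant `R > 0` (components in an
orthonormal basis, `g i j = δᵢⱼ`), one has
`-Rm_{ikjl} E_{ij} E_{kl} + Ric_{jk} E_{ij} E_{ik} ≥ (1/(n-1))|E|²(R - √(n(n-1))|E|)`. -/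
theorem conformally_flat_curvature_inequality (n : ℕ) (hn : 3 ≤ n) (R : ℝ) (hR : 0 < R)
    (E : Fin n → Fin n → ℝ) (hsymm : ∀ i j, E i j = E j i) (htr : ∑ i, E i i = 0)
    (g : Fin n → Fin n → ℝ) (hg : ∀ i j, g i j = if i = j then 1 else 0)
    (Rm : Fin n → Fin n → Fin n → Fin n → ℝ)
    (hRm : ∀ i k j l, Rm i k j l =
        (1 / ((n : ℝ) - 2)) *
          (E i j * g k l - E i l * g j k + E k l * g i j - E j k * g i l) +
        (R / ((n : ℝ) * ((n : ℝ) - 1))) * (g i j * g k l - g i l * g j k))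
    (Ric : Fin n → Fin n → ℝ)
    (hRic : ∀ j k, Ric j k = E j k + (R / (n : ℝ)) * g j k) :
    -(∑ i, ∑ k, ∑ j, ∑ l, Rm i k j l * E i j * E k l) +
        (∑ i, ∑ j, ∑ k, Ric j k * E i j * E i k) ≥
      (1 / ((n : ℝ) - 1)) * (∑ i, ∑ j, (E i j) ^ 2) *
        (R - Real.sqrt ((n : ℝ) * ((n : ℝ) - 1)) * Real.sqrt (∑ i, ∑ j, (E i j) ^ 2)) :=
  conformally_flat_curvature_inequality_general n hn R E hsymm htr g hg Rm hRm Ric hRic
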